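/- Let C be a q-ary code of length n and let t and r̃ be positive integers. Suppose that for every coordinate i ∈ {1,…,n} there exist t pairwise disjoint sets Γ_i^1, …, Γ_i^t ⊆ {1,…,n} \ {i}, each of size at most r̃, such that for each j ∈ {1,…,t}, any two codewords of C agreeing on all coordinates in Γ_i^j agree at coordinate i. Then for every s ∈ {1,…,t}, the code C has (r̃·s, s)-cooperative locality. -/
import Mathlib


/-- A code `C ⊆ (Fin n → Fin q)` has `(r, ℓ)`-cooperative locality: for every set `S`
of `ℓ` coordinates there is a set `Γ` of at most `r` coordinates, disjoint from `S`,
such that any two codewords agreeing on `Γ` agree on `S`. -/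
def CoopLocal {n q : ℕ} (C : Set (Fin n → Fin q)) (r ℓ : ℕ) : Prop :=
  ∀ S : Finset (Fin n), S.card = ℓ →
    ∃ Γ : Finset (Fin n), Disjoint Γ S ∧ Γ.card ≤ r ∧
      ∀ c₁ ∈ C, ∀ c₂ ∈ C, (∀ i ∈ Γ, c₁ i = c₂ i) → ∀ i ∈ S, c₁ i = c₂ i

lemma exists_disjoint_group {n t : ℕ} (i : Fin n) (G : Fin t → Finset (Fin n))
    (hnotin : ∀ j, i ∉ G j) (hdisj : ∀ j j', j ≠ j' → Disjoint (G j) (G j'))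
    (S : Finset (Fin n)) (hiS : i ∈ S) (hS : S.card ≤ t) :
    ∃ j, Disjoint (G j) S := by
  by_contra h
  push_neg at h
  have hx : ∀ j, ∃ x, x ∈ G j ∧ x ∈ S.erase i := by
    intro j
    obtain ⟨x, hx1, hx2⟩ := Finset.not_disjoint_iff.mp (h j)
    exact ⟨x, hx1, Finset.mem_erase.mpr ⟨fun he => hnotin j (he ▸ hx1), hx2⟩⟩
  choose f hf1 hf2 using hx
  have hinj : Function.Injective f := by
    intro j j' he
    by_contra hne
    exact Finset.disjoint_left.mp (hdisj j j' hne) (hf1 j) (he ▸ hf1 j')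
  have : t ≤ (S.erase i).card := by
    have := Finset.card_le_card_of_injOn (s := Finset.univ) f (fun j _ => hf2 j)
      (fun a _ b _ h => hinj h)
    simpa using this
  have hlt : (S.erase i).card < S.card := Finset.card_erase_lt_of_mem hiS
  omega

/-- if every coordinate of a `q`-ary code `C` of length `n` has `t`
pairwise disjoint repair groups, each of size at most `r̃` and avoiding that coordinate,
then for every `1 ≤ s ≤ t` the code `C` has `(r̃·s, s)`-cooperative locality. -/
theorem stmt_5 (q n t r' : ℕ) (ht : 0 < t) (hr' : 0 < r')
    (C : Set (Fin n → Fin q))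
    (hrep : ∀ i : Fin n, ∃ Γ : Fin t → Finset (Fin n),
      (∀ j, i ∉ Γ j) ∧
      (∀ j, (Γ j).card ≤ r') ∧
      (∀ j j', j ≠ j' → Disjoint (Γ j) (Γ j')) ∧
      (∀ j, ∀ c₁ ∈ C, ∀ c₂ ∈ C, (∀ m ∈ Γ j, c₁ m = c₂ m) → c₁ i = c₂ i)) :
    ∀ s : ℕ, 1 ≤ s → s ≤ t → CoopLocal C (r' * s) s := by
  intro s hs1 hst S hScard
  choose G h1 h2 h3 h4 using hrep
  have hjx : ∀ i ∈ S, ∃ j, Disjoint (G i j) S := by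
    intro i hi
    exact exists_disjoint_group i (G i) (h1 i) (h3 i) S hi (hScard ▸ hst)
  have htne : Nonempty (Fin t) := ⟨⟨0, ht⟩⟩
  classical
  let jf : Fin n → Fin t := fun i =>
    if h : ∃ j, Disjoint (G i j) S then h.choose else Classical.arbitrary _
  have hjf : ∀ i ∈ S, Disjoint (G i (jf i)) S := by
    intro i hi
    have h := hjx i hi
    simp only [jf, dif_pos h]
    exact h.choose_spec
  refine ⟨S.biUnion (fun i => G i (jf i)), ?_, ?_, ?_⟩
  · rw [Finset.disjoint_left]
    intro a ha haS
    obtain ⟨i, hi, hai⟩ := Finset.mem_biUnion.mp ha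
    exact (Finset.disjoint_left.mp (hjf i hi)) hai haS
  · calc (S.biUnion (fun i => G i (jf i))).card ≤ ∑ i ∈ S, (G i (jf i)).card :=
          Finset.card_biUnion_le
      _ ≤ ∑ _i ∈ S, r' := Finset.sum_le_sum (fun i _ => h2 i (jf i))
      _ = r' * s := by rw [Finset.sum_const, hScard, smul_eq_mul, Nat.mul_comm]
  · intro c₁ hc₁ c₂ hc₂ hagr i hi
    exact h4 i (jf i) c₁ hc₁ c₂ hc₂ (fun m hm =>
      hagr m (Finset.mem_biUnion.mpr ⟨i, hi, hm⟩))
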